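/- Let k ≥ 2 be an integer and a, b real numbers with b ≠ 0 and |(k-1)^{k-1}·a^k/(k^k·b^{k-1})| > 1 (in particular a ≠ 0). Then the series α = (-b/a)·Σ_{n≥0} (1/((k-1)n + 1))·C(kn, n)·((-1)^k·b^{k-1}/a^k)ⁿ converges, and its sum satisfies α^k + aα + b = 0. -/

import Mathlib

/-!
The coefficients are the Raney numbers `R_s(n) = s / (s + kn) · C(s + kn, n)` at `s = 1`.
They obey the Pascal-type recurrence `R_{s+1}(n+1) = R_s(n+1) + R_{s+k}(n)`, which yields by
induction the convolution `∑_{i+j=n} R_r(i) R_s(j) = R_{r+s}(n)`. Since `C(s + kn, n)` is one term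
of the binomial expansion of `(1 + (k-1))^(s+kn)`, the series `B_s(t) = ∑ R_s(n) tⁿ` converge
absolutely for `|t| < (k-1)^(k-1) / k^k`, and the Cauchy product turns the convolution into
`B_s = B_1^s`. Together with `R_1(n+1) = R_k(n)` this gives `B = 1 + t B^k` for `B = B_1`, and for
`t = (-1)^k b^(k-1) / a^k` the number `α = -(b/a) B` satisfies `α^k = b t B^k = b (B - 1) = -aα - b`.
-/

open Finset

theorem choose_mul_pow_mul_pow_le_add_pow {R : Type*} [CommSemiring R] [PartialOrder R]
    [IsOrderedRing R] {x y : R} (hx : 0 ≤ x) (hy : 0 ≤ y) (m n : ℕ) :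
    m.choose n * (x ^ n * y ^ (m - n)) ≤ (x + y) ^ m := by
  rcases le_or_gt n m with hnm | hmn
  · rw [add_pow, mul_comm]
    exact single_le_sum (f := fun i => x ^ i * y ^ (m - i) * m.choose i)
      (fun i _ => by positivity) (mem_range.mpr (Nat.lt_succ_of_le hnm))
  · rw [Nat.choose_eq_zero_of_lt hmn, Nat.cast_zero, zero_mul]
    positivity

/-- With the convention `0 / 0 = 0`, `raney k 0 0 = 0` rather than the combinatorial value `1`,
so identities involving weight `0` need care. -/
noncomputable def raney (k s n : ℕ) : ℝ :=
  s / (s + k * n) * (s + k * n).choose n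

lemma raney_nonneg (k s n : ℕ) : 0 ≤ raney k s n := by
  unfold raney; positivity

@[simp]
lemma raney_zero_weight (k n : ℕ) : raney k 0 n = 0 := by
  simp [raney]

lemma raney_zero_index (k : ℕ) {s : ℕ} (hs : s ≠ 0) : raney k s 0 = 1 := by
  simp [raney, hs]

lemma raney_one {k : ℕ} (hk : 0 < k) (n : ℕ) :
    raney k 1 n = 1 / (((k : ℝ) - 1) * n + 1) * (k * n).choose n := by
  have hn : n ≤ k * n + 1 := by nlinarith
  have h := congrArg (Nat.cast (R := ℝ)) (Nat.choose_mul_succ_eq (k * n) n)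
  push_cast [Nat.cast_sub hn] at h
  have hd : (k : ℝ) * n + 1 - n ≠ 0 := by
    have : (1 : ℝ) ≤ k := by exact_mod_cast hk
    nlinarith
  unfold raney
  rw [add_comm 1, show ((k : ℝ) - 1) * n + 1 = k * n + 1 - n by ring]
  push_cast
  field_simp
  linear_combination -h

lemma raney_le_choose (k s n : ℕ) : raney k s n ≤ (s + k * n).choose n := by
  unfold raney
  refine mul_le_of_le_one_left (by positivity) (div_le_one_of_le₀ ?_ (by positivity))
  exact le_add_of_nonneg_right (by positivity)

lemma raney_le {k : ℕ} (hk : 2 ≤ k) (s n : ℕ) :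
    raney k s n ≤ (k / (k - 1) : ℝ) ^ s * ((k : ℝ) ^ k / ((k : ℝ) - 1) ^ (k - 1)) ^ n := by
  have hc : (0 : ℝ) < k - 1 := sub_pos.mpr (by exact_mod_cast hk)
  have hexp : s + k * n - n = s + (k - 1) * n := by
    have := Nat.sub_one_mul k n
    have : n ≤ k * n := Nat.le_mul_of_pos_left n (by omega)
    omega
  have h := choose_mul_pow_mul_pow_le_add_pow zero_le_one hc.le (s + k * n) n
  rw [one_pow, one_mul, add_sub_cancel, hexp] at h
  refine (raney_le_choose k s n).trans ?_
  rw [div_pow, div_pow, ← pow_mul, ← pow_mul, div_mul_div_comm, ← pow_add, ← pow_add,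
    le_div_iff₀ (by positivity)]
  exact h

lemma raney_succ_succ {k : ℕ} (hk : 0 < k) (s n : ℕ) :
    raney k (s + 1) (n + 1) = raney k s (n + 1) + raney k (s + k) n := by
  unfold raney
  rw [show s + 1 + k * (n + 1) = s + k * (n + 1) + 1 by ring,
    show s + k + k * n = s + k * (n + 1) by ring]
  obtain ⟨m, hm⟩ : ∃ m, s + k * (n + 1) = m := ⟨_, rfl⟩
  have hnm : n < m := by nlinarith
  have hmR : (s : ℝ) + k * (n + 1) = m := by exact_mod_cast hm
  have hm0 : (m : ℝ) ≠ 0 := Nat.cast_ne_zero.mpr (by omega)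
  have hpascal : ((m + 1).choose (n + 1) : ℝ) = (m + 1) * m.choose n / (n + 1) := by
    rw [eq_div_iff (by positivity)]
    exact_mod_cast (Nat.add_one_mul_choose_eq m n).symm
  have hshift : (m.choose (n + 1) : ℝ) = m.choose n * (m - n) / (n + 1) := by
    rw [eq_div_iff (by positivity), ← Nat.cast_sub hnm.le]
    exact_mod_cast Nat.choose_succ_right_eq m n
  push_cast
  rw [hm, show (s : ℝ) + 1 + k * (n + 1) = m + 1 by linarith,
    show (s : ℝ) + k + k * n = m by linarith, hmR, hpascal, hshift,
    show (s : ℝ) = m - k * (n + 1) by linarith]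
  field_simp
  ring

lemma raney_one_succ {k : ℕ} (hk : 0 < k) (n : ℕ) : raney k 1 (n + 1) = raney k k n := by
  simpa using raney_succ_succ hk 0 n

theorem sum_antidiagonal_raney_mul_raney {k r s : ℕ} (hk : 0 < k) (hr : r ≠ 0) (hs : s ≠ 0)
    (n : ℕ) : ∑ p ∈ antidiagonal n, raney k r p.1 * raney k s p.2 = raney k (r + s) n := by
  induction n generalizing s with
  | zero =>
    simp [raney_zero_index _ hr, raney_zero_index _ hs, raney_zero_index _ (by omega : r + s ≠ 0)]
  | succ n ih =>
    rw [Nat.sum_antidiagonal_succ', raney_zero_index _ hs, mul_one]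
    -- Now induct on `s`; the base case `s = 0` survives because `raney k 0 = 0`.
    clear hs
    induction s with
    | zero => simp
    | succ j ihj =>
      simp only [raney_succ_succ hk j, mul_add, sum_add_distrib, ih (s := j + k) (by omega)]
      rw [← add_assoc, ihj, ← add_assoc r j k, ← raney_succ_succ hk, add_assoc]

section GeneratingFunction

variable {k : ℕ} {t : ℝ}

noncomputable def raneyGF (k s : ℕ) (t : ℝ) : ℝ :=
  ∑' n, raney k s n * t ^ n

lemma summable_norm_raney_mul_pow (hk : 2 ≤ k) (ht : |t| < ((k : ℝ) - 1) ^ (k - 1) / k ^ k)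
    (s : ℕ) : Summable fun n => ‖raney k s n * t ^ n‖ := by
  have hc : (0 : ℝ) < k - 1 := sub_pos.mpr (by exact_mod_cast hk)
  have hq : (k : ℝ) ^ k / ((k : ℝ) - 1) ^ (k - 1) * |t| < 1 := by
    rw [lt_div_iff₀ (by positivity)] at ht
    rw [div_mul_eq_mul_div, div_lt_one (by positivity)]
    linarith
  refine .of_nonneg_of_le (fun n => norm_nonneg _) (fun n => ?_)
    ((summable_geometric_of_lt_one (by positivity) hq).mul_left ((k / (k - 1) : ℝ) ^ s))
  rw [norm_mul, norm_pow, Real.norm_eq_abs, Real.norm_eq_abs, abs_of_nonneg (raney_nonneg k s n),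
    mul_pow, ← mul_assoc]
  gcongr
  exact raney_le hk s n

lemma raneyGF_add (hk : 2 ≤ k) (ht : |t| < ((k : ℝ) - 1) ^ (k - 1) / k ^ k) {r s : ℕ}
    (hr : r ≠ 0) (hs : s ≠ 0) : raneyGF k (r + s) t = raneyGF k r t * raneyGF k s t := by
  unfold raneyGF
  rw [tsum_mul_tsum_eq_tsum_sum_antidiagonal_of_summable_norm
    (summable_norm_raney_mul_pow hk ht r) (summable_norm_raney_mul_pow hk ht s)]
  refine tsum_congr fun n => ?_
  rw [← sum_antidiagonal_raney_mul_raney (by omega) hr hs, sum_mul]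
  refine sum_congr rfl fun p hp => ?_
  rw [← mem_antidiagonal.mp hp, pow_add]
  ring

lemma raneyGF_eq_pow (hk : 2 ≤ k) (ht : |t| < ((k : ℝ) - 1) ^ (k - 1) / k ^ k) {s : ℕ}
    (hs : s ≠ 0) : raneyGF k s t = raneyGF k 1 t ^ s := by
  induction s, Nat.one_le_iff_ne_zero.mpr hs using Nat.le_induction with
  | base => rw [pow_one]
  | succ s hs ih => rw [raneyGF_add hk ht (by omega) one_ne_zero, ih (by omega), pow_succ]

lemma raneyGF_one_eq (hk : 2 ≤ k) (ht : |t| < ((k : ℝ) - 1) ^ (k - 1) / k ^ k) :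
    raneyGF k 1 t = 1 + t * raneyGF k 1 t ^ k := by
  rw [← raneyGF_eq_pow hk ht (by omega), raneyGF,
    (summable_norm_raney_mul_pow hk ht 1).of_norm.tsum_eq_zero_add, raneyGF, ← tsum_mul_left]
  congr 1
  · simp [raney_zero_index]
  · refine tsum_congr fun n => ?_
    rw [raney_one_succ (by omega), pow_succ]
    ring

end GeneratingFunction

lemma abs_lt_abs_of_one_lt_abs_div {α : Type*} [Field α] [LinearOrder α] [IsStrictOrderedRing α]
    {x y : α} (h : 1 < |x / y|) : |y| < |x| := by
  rw [abs_div] at h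
  have hy : 0 < |y| := by
    rcases (abs_nonneg y).eq_or_lt with h0 | h0
    · rw [← h0, div_zero] at h; linarith
    · exact h0
  exact (one_lt_div hy).mp h

theorem hypergeometric_series_trinomial_root_general_general (k : ℕ) (hk : 2 ≤ k)
    (a b : ℝ)
    (hr : |((k : ℝ) - 1) ^ (k - 1) * a ^ k / ((k : ℝ) ^ k * b ^ (k - 1))| > 1) :
    Summable (fun n : ℕ =>
      (1 / (((k : ℝ) - 1) * (n : ℝ) + 1)) * (Nat.choose (k * n) n : ℝ) *
        ((-1 : ℝ) ^ k * b ^ (k - 1) / a ^ k) ^ n) ∧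
    let α : ℝ := (-b / a) *
      ∑' n : ℕ, (1 / (((k : ℝ) - 1) * (n : ℝ) + 1)) * (Nat.choose (k * n) n : ℝ) *
        ((-1 : ℝ) ^ k * b ^ (k - 1) / a ^ k) ^ n
    α ^ k + a * α + b = 0 := by
  set t := (-1 : ℝ) ^ k * b ^ (k - 1) / a ^ k
  have ha : a ≠ 0 := by
    rintro rfl
    norm_num [zero_pow (by omega : k ≠ 0)] at hr
  have ht : |t| < ((k : ℝ) - 1) ^ (k - 1) / k ^ k := by
    have hc : (0 : ℝ) < k - 1 := sub_pos.mpr (by exact_mod_cast hk)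
    rw [show ((k : ℝ) - 1) ^ (k - 1) * a ^ k / ((k : ℝ) ^ k * b ^ (k - 1))
        = ((k : ℝ) - 1) ^ (k - 1) / k ^ k / (b ^ (k - 1) / a ^ k) by
      rw [div_div_eq_mul_div]; ring] at hr
    show |(-1 : ℝ) ^ k * b ^ (k - 1) / a ^ k| < _
    rw [mul_div_assoc, abs_mul, abs_neg_one_pow, one_mul,
      ← abs_of_pos (div_pos (pow_pos hc (k - 1)) (by positivity))]
    exact abs_lt_abs_of_one_lt_abs_div hr
  simp only [← raney_one (by omega : 0 < k)]
  refine ⟨(summable_norm_raney_mul_pow hk ht 1).of_norm, ?_⟩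
  have hB := raneyGF_one_eq hk ht
  have hpow : (-b / a) ^ k = b * t := by
    rw [div_pow, neg_pow, ← mul_pow_sub_one (by omega : k ≠ 0) b]
    ring
  show ((-b / a) * raneyGF k 1 t) ^ k + a * ((-b / a) * raneyGF k 1 t) + b = 0
  rw [mul_pow, hpow, ← mul_assoc, mul_div_cancel₀ _ ha]
  linear_combination (-b) * hB

/-- Lagrange inversion for the trinomial `x^k + ax + b`: if
`|(k-1)^(k-1)·a^k/(k^k·b^(k-1))| > 1`, the hypergeometric series
`α = (-b/a)·Σ (1/((k-1)n+1))·C(kn,n)·((-1)^k·b^(k-1)/a^k)ⁿ` converges and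
its sum is a root of `x^k + ax + b`. -/
theorem hypergeometric_series_trinomial_root_general (k : ℕ) (hk : 2 ≤ k)
    (a b : ℝ) (hb : b ≠ 0)
    (hr : |((k : ℝ) - 1) ^ (k - 1) * a ^ k / ((k : ℝ) ^ k * b ^ (k - 1))| > 1) :
    Summable (fun n : ℕ =>
      (1 / (((k : ℝ) - 1) * (n : ℝ) + 1)) * (Nat.choose (k * n) n : ℝ) *
        ((-1 : ℝ) ^ k * b ^ (k - 1) / a ^ k) ^ n) ∧
    let α : ℝ := (-b / a) *
      ∑' n : ℕ, (1 / (((k : ℝ) - 1) * (n : ℝ) + 1)) * (Nat.choose (k * n) n : ℝ) *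
        ((-1 : ℝ) ^ k * b ^ (k - 1) / a ^ k) ^ n
    α ^ k + a * α + b = 0 :=
  hypergeometric_series_trinomial_root_general_general k hk a b hr
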